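/- Main theorem: There is a unitary transform U : ⊕_{k=0}^d ⋀^k ℂ^d ≅ ℂ^{2^d} → ℂ^{2^d} such that U H_{HD;2h} U* = H_{KS;h}, where H_{HD;2h} = -i(d̃ - d̃*) is the discrete Hodge-Dirac operator on square-summable cochains over 2hℤ^d and H_{KS;h} is the massless staggered fermion Hamiltonian on ℓ²(2hℤ^d) ⊗ ℂ^{2^d}. -/

import Mathlib

noncomputable section

/-- The `j`-th standard basis vector of `ℤ^d`. -/
def e (d : ℕ) (j : Fin d) : Fin d → ℤ := Pi.single j 1

/-- `s_{j-1}(a)` for `a ∈ Λ = {0,1}^d`. -/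
def sL (d : ℕ) (j : Fin d) (a : Fin d → Fin 2) : ℕ :=
  ∑ k ∈ Finset.univ.filter (fun k : Fin d => k < j), (a k : ℕ)

/-- Forward difference `D^+_{2h;j}` on functions on `2hℤ^d` (indexed by `ℤ^d`). -/
def Dp2 (d : ℕ) (h : ℝ) (j : Fin d) (v : (Fin d → ℤ) → ℂ) : (Fin d → ℤ) → ℂ :=
  fun m => (1 / (2 * Complex.I * h)) * (v (m + e d j) - v m)

/-- Backward difference `D^-_{2h;j}` on functions on `2hℤ^d`. -/
def Dm2 (d : ℕ) (h : ℝ) (j : Fin d) (v : (Fin d → ℤ) → ℂ) : (Fin d → ℤ) → ℂ :=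
  fun m => (1 / (2 * Complex.I * h)) * (v m - v (m - e d j))

/-- The massless staggered fermion Hamiltonian `H_{KS;h}` on `ℓ²(2hℤ^d) ⊗ ℂ^Λ`. -/
def HKS (d : ℕ) (h : ℝ) (w : (Fin d → Fin 2) → (Fin d → ℤ) → ℂ) :
    (Fin d → Fin 2) → (Fin d → ℤ) → ℂ :=
  fun a m => ∑ j : Fin d,
    if a j = 1 then
      ((-1 : ℂ) ^ (sL d j a)) * Dp2 d h j (w (Function.update a j 0)) m
    else
      ((-1 : ℂ) ^ (sL d j a)) * Dm2 d h j (w (Function.update a j 1)) m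

/-- The discrete exterior derivative `d̃` of Miranda–Parra on square-summable cochains
over `2hℤ^d`, written in the coordinates given by the basis `{dx^a}_{a∈Λ}` of `⋀ℂ^d`
(so a cochain is `w : Λ → ℤ^d → ℂ`, `f = ∑_a w_a dx^a`):
`(d̃ w)_a = ∑_{j : a_j = 1} (-1)^{s_{j-1}(a)} (1/(2h))(w_{a-e_j}(·+2he_j) - w_{a-e_j})`. -/
def Dt (d : ℕ) (h : ℝ) (w : (Fin d → Fin 2) → (Fin d → ℤ) → ℂ) :
    (Fin d → Fin 2) → (Fin d → ℤ) → ℂ :=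
  fun a m => ∑ j : Fin d,
    if a j = 1 then
      ((-1 : ℂ) ^ (sL d j a)) *
        ((1 / (2 * (h : ℂ))) *
          (w (Function.update a j 0) (m + e d j) - w (Function.update a j 0) m))
    else 0

/-!
With `U` the identity (the basis `dx^a` identified with the standard basis of `ℂ^Λ`), the only
work is to determine `d̃*`. Testing the adjoint relation against unit cochains shows that on
square-summable cochains it is the explicit backward-difference operator `DtAdj`; then
`-i(d̃ - d̃*)` agrees with `H_{KS;h}` term by term, because `1/(2ih) = -i/(2h)`.
-/

open Function Finset

theorem hasSum_star_mul_single_shift_sub {G : Type*} [AddGroup G] [DecidableEq G]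
    (c : ℂ) (e m : G) (f : G → ℂ) :
    HasSum
      (fun x => star (c * ((Pi.single m 1 : G → ℂ) (x + e) - (Pi.single m 1 : G → ℂ) x)) * f x)
      (star c * (f (m - e) - f m)) := by
  have hsplit :
      (fun x => star (c * ((Pi.single m 1 : G → ℂ) (x + e) - (Pi.single m 1 : G → ℂ) x)) * f x)
      = (fun x => if x = m - e then star c * f (m - e) else 0)
        - (fun x => if x = m then star c * f m else 0) := by
    funext x
    have hshift : (Pi.single m 1 : G → ℂ) (x + e) = (Pi.single (m - e) 1 : G → ℂ) x := by
      simp only [Pi.single_apply, eq_sub_iff_add_eq]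
    simp only [hshift, Pi.single_apply, Pi.sub_apply]
    split_ifs with h1 h2 h2
    · rw [← h1, ← h2]; simp
    · rw [h1]; simp
    · rw [h2]; simp
    · simp
  rw [hsplit, mul_sub]
  exact (hasSum_ite_eq _ _).sub (hasSum_ite_eq _ _)

theorem tsum_tsum_star_single_mul {ι κ : Type*} [DecidableEq ι] [DecidableEq κ]
    (a : ι) (m : κ) (f : ι → κ → ℂ) :
    ∑' i, ∑' k, star ((Pi.single a (Pi.single m 1 : κ → ℂ) : ι → κ → ℂ) i k) * f i k = f a m := by
  rw [tsum_eq_single a, tsum_eq_single m]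
  · simp
  · intro k hk; simp [hk]
  · intro i hi; simp [hi]

theorem memℓp_single_single {ι κ : Type*} [DecidableEq ι] [DecidableEq κ] (a : ι) (m : κ) :
    Memℓp (fun p : ι × κ => (Pi.single a (Pi.single m 1 : κ → ℂ) : ι → κ → ℂ) p.1 p.2) 2 := by
  refine (memℓp_zero ((Set.finite_singleton (a, m)).subset ?_)).of_exponent_ge zero_le
  rintro ⟨i, k⟩ hik
  by_cases hi : i = a <;> by_cases hk : k = m <;> simp_all

theorem and_update_eq_iff {ι β : Type*} [DecidableEq ι] {a a' : ι → β} {j : ι} {x y : β} :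
    (a' j = y ∧ update a' j x = a) ↔ (a j = x ∧ a' = update a j y) := by
  constructor
  · rintro ⟨rfl, rfl⟩
    simp
  · rintro ⟨hx, rfl⟩
    simp [← hx]

theorem sum_ite_and_update_eq {ι β M : Type*} [Fintype ι] [DecidableEq ι] [Fintype β]
    [DecidableEq β] [AddCommMonoid M] (a : ι → β) (j : ι) (x y : β) (g : (ι → β) → M) :
    ∑ a', (if a' j = y ∧ update a' j x = a then g a' else 0)
      = if a j = x then g (update a j y) else 0 := by
  simp_rw [and_update_eq_iff, ite_and]
  split_ifs <;> simp

theorem sL_update_self (d : ℕ) (j : Fin d) (a : Fin d → Fin 2) (v : Fin 2) :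
    sL d j (update a j v) = sL d j a :=
  sum_congr rfl fun k hk => by rw [update_of_ne (mem_filter.mp hk).2.ne]

def DtAdj (d : ℕ) (h : ℝ) (w : (Fin d → Fin 2) → (Fin d → ℤ) → ℂ) :
    (Fin d → Fin 2) → (Fin d → ℤ) → ℂ :=
  fun a m => ∑ j : Fin d,
    if a j = 0 then
      ((-1 : ℂ) ^ (sL d j a)) *
        ((1 / (2 * (h : ℂ))) * (w (update a j 1) (m - e d j) - w (update a j 1) m))
    else 0

theorem hasSum_star_Dt_single_mul (d : ℕ) (h : ℝ) (a : Fin d → Fin 2) (m : Fin d → ℤ)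
    (w : (Fin d → Fin 2) → (Fin d → ℤ) → ℂ) (b : Fin d → Fin 2) :
    HasSum (fun x => star (Dt d h (Pi.single a (Pi.single m 1)) b x) * w b x)
      (∑ j, if b j = 1 ∧ update b j 0 = a then
        (-1 : ℂ) ^ sL d j b * (1 / (2 * (h : ℂ))) * (w b (m - e d j) - w b m) else 0) := by
  simp only [Dt, star_sum, sum_mul]
  refine hasSum_sum fun j _ => ?_
  by_cases hb : b j = 1
  · by_cases ha : update b j 0 = a
    · simp only [hb, ha, and_self, ↓reduceIte, Pi.single_eq_same]
      convert hasSum_star_mul_single_shift_sub ((-1 : ℂ) ^ sL d j b * (1 / (2 * (h : ℂ))))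
        (e d j) m (w b) using 1
      · simp only [mul_assoc]
      · simp [Complex.conj_ofReal]
    · simp [hb, ha, hasSum_zero]
  · simp [hb, hasSum_zero]

theorem tsum_star_Dt_single_mul (d : ℕ) (h : ℝ) (a : Fin d → Fin 2) (m : Fin d → ℤ)
    (w : (Fin d → Fin 2) → (Fin d → ℤ) → ℂ) :
    ∑' b, ∑' x, star (Dt d h (Pi.single a (Pi.single m 1)) b x) * w b x = DtAdj d h w a m := by
  rw [tsum_fintype, sum_congr rfl fun b _ => (hasSum_star_Dt_single_mul d h a m w b).tsum_eq,
    sum_comm]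
  refine sum_congr rfl fun j _ => ?_
  rw [sum_ite_and_update_eq, sL_update_self, mul_assoc]

def IsAdjointDt (d : ℕ) (h : ℝ)
    (Ds : ((Fin d → Fin 2) → (Fin d → ℤ) → ℂ) → ((Fin d → Fin 2) → (Fin d → ℤ) → ℂ)) : Prop :=
  ∀ w w' : (Fin d → Fin 2) → (Fin d → ℤ) → ℂ,
      Memℓp (fun p : (Fin d → Fin 2) × (Fin d → ℤ) => w p.1 p.2) 2 →
      Memℓp (fun p : (Fin d → Fin 2) × (Fin d → ℤ) => w' p.1 p.2) 2 →
      (((2 * h) ^ d : ℝ) : ℂ) *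
          ∑' a : Fin d → Fin 2, ∑' m : Fin d → ℤ, star (Dt d h w a m) * w' a m
        = (((2 * h) ^ d : ℝ) : ℂ) *
          ∑' a : Fin d → Fin 2, ∑' m : Fin d → ℤ, star (w a m) * Ds w' a m

theorem IsAdjointDt.apply_eq_DtAdj {d : ℕ} {h : ℝ} (hh : h ≠ 0)
    {Ds : ((Fin d → Fin 2) → (Fin d → ℤ) → ℂ) → ((Fin d → Fin 2) → (Fin d → ℤ) → ℂ)}
    (hDs : IsAdjointDt d h Ds) {w : (Fin d → Fin 2) → (Fin d → ℤ) → ℂ}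
    (hw : Memℓp (fun p : (Fin d → Fin 2) × (Fin d → ℤ) => w p.1 p.2) 2)
    (a : Fin d → Fin 2) (m : Fin d → ℤ) : Ds w a m = DtAdj d h w a m := by
  -- test the adjoint relation against the unit cochain supported at `(a, m)`
  have hvol : (((2 * h) ^ d : ℝ) : ℂ) ≠ 0 :=
    Complex.ofReal_ne_zero.mpr (pow_ne_zero d (mul_ne_zero two_ne_zero hh))
  have := mul_left_cancel₀ hvol (hDs _ w (memℓp_single_single a m) hw)
  rwa [tsum_star_Dt_single_mul, tsum_tsum_star_single_mul, eq_comm] at this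

theorem one_div_two_I_mul (z : ℂ) : 1 / (2 * Complex.I * z) = -Complex.I * (1 / (2 * z)) := by
  rw [one_div, one_div, mul_inv, mul_inv, mul_inv, Complex.inv_I]; ring

theorem neg_I_mul_Dt_sub_DtAdj (d : ℕ) (h : ℝ) (w : (Fin d → Fin 2) → (Fin d → ℤ) → ℂ)
    (a : Fin d → Fin 2) (m : Fin d → ℤ) :
    -Complex.I * (Dt d h w a m - DtAdj d h w a m) = HKS d h w a m := by
  simp only [Dt, DtAdj, HKS, Dp2, Dm2, ← sum_sub_distrib, mul_sum, one_div_two_I_mul]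
  refine sum_congr rfl fun j _ => ?_
  obtain h0 | h1 : a j = 0 ∨ a j = 1 := by omega
  · simp only [h0, zero_ne_one, ↓reduceIte]; ring
  · simp only [h1, one_ne_zero, ↓reduceIte]; ring

/-- `Ds` ranges over the adjoints of `d̃` for the `ℓ²`-inner product `(2h)^d ∑_a ∑_m conj(·)·`,
and `U` is a unitary of the coefficient space `ℂ^Λ`, identified with `⋀ℂ^d` via the basis
`{dx^a}`. -/
theorem stmt14_general (d : ℕ) (h : ℝ) (hh : 0 < h)
    (Ds : ((Fin d → Fin 2) → (Fin d → ℤ) → ℂ) → ((Fin d → Fin 2) → (Fin d → ℤ) → ℂ))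
    (hadj : ∀ w w' : (Fin d → Fin 2) → (Fin d → ℤ) → ℂ,
      Memℓp (fun p : (Fin d → Fin 2) × (Fin d → ℤ) => w p.1 p.2) 2 →
      Memℓp (fun p : (Fin d → Fin 2) × (Fin d → ℤ) => w' p.1 p.2) 2 →
      (((2 * h) ^ d : ℝ) : ℂ) *
          ∑' a : Fin d → Fin 2, ∑' m : Fin d → ℤ, star (Dt d h w a m) * w' a m
        = (((2 * h) ^ d : ℝ) : ℂ) *
          ∑' a : Fin d → Fin 2, ∑' m : Fin d → ℤ, star (w a m) * Ds w' a m) :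
    ∃ U : EuclideanSpace ℂ (Fin d → Fin 2) ≃ₗᵢ[ℂ] EuclideanSpace ℂ (Fin d → Fin 2),
      ∀ w : (Fin d → Fin 2) → (Fin d → ℤ) → ℂ,
        Memℓp (fun p : (Fin d → Fin 2) × (Fin d → ℤ) => w p.1 p.2) 2 →
        ∀ (a : Fin d → Fin 2) (m : Fin d → ℤ),
          U (WithLp.toLp 2 (fun b => -Complex.I * (Dt d h w b m - Ds w b m))) a
            = HKS d h (fun b m' => U (WithLp.toLp 2 (fun b' => w b' m')) b) a m := by
  refine ⟨LinearIsometryEquiv.refl ℂ _, fun w hw a m => ?_⟩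
  change -Complex.I * (Dt d h w a m - Ds w a m) = HKS d h w a m
  rw [IsAdjointDt.apply_eq_DtAdj hh.ne' hadj hw, neg_I_mul_Dt_sub_DtAdj]

/-- Main theorem: there is a unitary transform `U : ⊕_k ⋀^k ℂ^d ≃ ℂ^{2^d}` (a unitary of
the `2^d`-dimensional coefficient space, identified with `ℂ^Λ` via the basis `{dx^a}`)
such that `U H_{HD;2h} U* = H_{KS;h}`, where `H_{HD;2h} = -i(d̃ - d̃*)` with `d̃*` any
adjoint of `d̃` for the `ℓ²`-inner product `(2h)^d ∑_a ∑_m conj(·)·`. -/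
theorem stmt14 (d : ℕ) (hd : 1 ≤ d) (h : ℝ) (hh : 0 < h)
    (Ds : ((Fin d → Fin 2) → (Fin d → ℤ) → ℂ) → ((Fin d → Fin 2) → (Fin d → ℤ) → ℂ))
    (hadj : ∀ w w' : (Fin d → Fin 2) → (Fin d → ℤ) → ℂ,
      Memℓp (fun p : (Fin d → Fin 2) × (Fin d → ℤ) => w p.1 p.2) 2 →
      Memℓp (fun p : (Fin d → Fin 2) × (Fin d → ℤ) => w' p.1 p.2) 2 →
      (((2 * h) ^ d : ℝ) : ℂ) *
          ∑' a : Fin d → Fin 2, ∑' m : Fin d → ℤ, star (Dt d h w a m) * w' a m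
        = (((2 * h) ^ d : ℝ) : ℂ) *
          ∑' a : Fin d → Fin 2, ∑' m : Fin d → ℤ, star (w a m) * Ds w' a m) :
    ∃ U : EuclideanSpace ℂ (Fin d → Fin 2) ≃ₗᵢ[ℂ] EuclideanSpace ℂ (Fin d → Fin 2),
      ∀ w : (Fin d → Fin 2) → (Fin d → ℤ) → ℂ,
        Memℓp (fun p : (Fin d → Fin 2) × (Fin d → ℤ) => w p.1 p.2) 2 →
        ∀ (a : Fin d → Fin 2) (m : Fin d → ℤ),
          U (WithLp.toLp 2 (fun b => -Complex.I * (Dt d h w b m - Ds w b m))) a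
            = HKS d h (fun b m' => U (WithLp.toLp 2 (fun b' => w b' m')) b) a m :=
  stmt14_general d h hh Ds hadj
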